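/- arXiv:0708.4234 — 3 statements merged into one kernel-verified Lean document; each statement's English description precedes it below -/
import Mathlib

section
/- The Hadamard product of two rational functions (power series with rational coefficients that are Taylor expansions of rational functions analytic at 0) is again the Taylor expansion of a rational function analytic at 0. -/
/-- Hadamard product of power series. -/
noncomputable def hadamard (f g : PowerSeries ℚ) : PowerSeries ℚ :=
  PowerSeries.mk fun n => (PowerSeries.coeff n f) * (PowerSeries.coeff n g)

/-- `f` is the Taylor expansion at 0 of a rational function analytic at 0. -/
def IsRationalPS (f : PowerSeries ℚ) : Prop :=
  ∃ p q : Polynomial ℚ, q.coeff 0 ≠ 0 ∧ (q : PowerSeries ℚ) * f = (p : PowerSeries ℚ)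

/-- `f` is algebraic over ℚ(z): a nonzero `Q(y,z)` satisfies `Q(f(z),z)=0`. -/
def IsAlgebraicPS (f : PowerSeries ℚ) : Prop :=
  ∃ Q : Polynomial (Polynomial ℚ), Q ≠ 0 ∧
    Polynomial.eval₂ Polynomial.coeToPowerSeries.ringHom f Q = 0

/-- `f` is holonomic: satisfies a nontrivial linear ODE with polynomial coefficients. -/
def IsHolonomicPS (f : PowerSeries ℚ) : Prop :=
  ∃ d : ℕ, ∃ c : Fin (d + 1) → Polynomial ℚ, (∃ j, c j ≠ 0) ∧
    ∑ j : Fin (d + 1), ((c j : PowerSeries ℚ) * (PowerSeries.derivativeFun)^[(j : ℕ)] f) = 0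

/-!
A power series over a field is rational exactly when the shifts `n ↦ a (n + i)` of its
coefficient sequence `a` span a finite-dimensional space, i.e. when some nonzero polynomial `P`
in the shift operator `σ` kills `a`: the reflected polynomial `X ^ deg P * P (1 / X)` is then a
denominator, and conversely a denominator reflected in a large enough degree kills `a`. Shifting
commutes with coefficientwise products, so the shifts of the Hadamard product lie in the product
of the two finite-dimensional shift spans, which is finite-dimensional again.
-/

open Polynomial Finset

section ShiftSpan

variable (K : Type*) [Field K]

def seqShift : Module.End K (ℕ → K) := LinearMap.funLeft K K (· + 1)

variable {K}

theorem seqShift_pow_apply (i : ℕ) (a : ℕ → K) (n : ℕ) : (seqShift K ^ i) a n = a (n + i) := by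
  induction i generalizing n with
  | zero => rfl
  | succ i ih =>
    rw [pow_succ', Module.End.mul_apply]
    exact (ih (n + 1)).trans (congrArg a (by omega))

def shiftSpan (a : ℕ → K) : Submodule K (ℕ → K) :=
  Submodule.span K (Set.range fun i => (seqShift K ^ i) a)

noncomputable def shiftEval (a : ℕ → K) : K[X] →ₗ[K] (ℕ → K) :=
  (LinearMap.applyₗ a).comp (aeval (seqShift K)).toLinearMap

theorem shiftEval_apply (a : ℕ → K) (P : K[X]) : shiftEval a P = aeval (seqShift K) P a := rfl

theorem range_shiftEval (a : ℕ → K) : LinearMap.range (shiftEval a) = shiftSpan a := by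
  apply le_antisymm
  · rintro _ ⟨P, rfl⟩
    rw [shiftEval_apply, aeval_eq_sum_range, LinearMap.sum_apply]
    exact Submodule.sum_mem _ fun i _ => Submodule.smul_mem _ _ (Submodule.subset_span ⟨i, rfl⟩)
  · refine Submodule.span_le.2 ?_
    rintro _ ⟨i, rfl⟩
    exact ⟨X ^ i, by simp [shiftEval_apply]⟩

theorem shiftSpan_mul_le (a b : ℕ → K) : shiftSpan (a * b) ≤ shiftSpan a * shiftSpan b := by
  refine Submodule.span_le.2 ?_
  rintro _ ⟨i, rfl⟩
  have : (seqShift K ^ i) (a * b) = (seqShift K ^ i) a * (seqShift K ^ i) b := by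
    ext n; simp [seqShift_pow_apply]
  simp only [SetLike.mem_coe, this]
  exact Submodule.mul_mem_mul (Submodule.subset_span ⟨i, rfl⟩) (Submodule.subset_span ⟨i, rfl⟩)

theorem Submodule.FG.shiftSpan_mul {a b : ℕ → K} (ha : (shiftSpan a).FG) (hb : (shiftSpan b).FG) :
    (shiftSpan (a * b)).FG :=
  (ha.mul hb).of_le (shiftSpan_mul_le a b)

theorem exists_aeval_seqShift_eq_zero {a : ℕ → K} (h : (shiftSpan a).FG) :
    ∃ P : K[X], P ≠ 0 ∧ aeval (seqShift K) P a = 0 := by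
  by_contra! H
  -- otherwise `P ↦ P(σ) a` embeds the infinite-dimensional `K[X]` into `shiftSpan a`
  have hinj : Function.Injective (shiftEval a) :=
    (injective_iff_map_eq_zero _).2 fun P hP => by_contra fun hne => H P hne hP
  have : Module.Finite K (LinearMap.range (shiftEval a)) := by
    rw [range_shiftEval]; exact Module.Finite.iff_fg.2 h
  exact Polynomial.not_finite
    (Module.Finite.of_injective _ ((LinearMap.injective_rangeRestrict_iff _).2 hinj))

theorem fg_shiftSpan_of_aeval_seqShift_eq_zero {a : ℕ → K} {P : K[X]} (hP : P ≠ 0)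
    (h : aeval (seqShift K) P a = 0) : (shiftSpan a).FG := by
  rw [← range_shiftEval]
  have hfg : (degreeLT K P.natDegree).FG := Module.Finite.iff_fg.1 inferInstance
  refine (hfg.map (shiftEval a)).of_le ?_
  rintro _ ⟨Q, rfl⟩
  -- `Q` and `Q % P` act alike on `a`, because `P` kills it
  refine ⟨Q % P, mem_degreeLT.2 (degree_eq_natDegree hP ▸ degree_mod_lt Q hP), ?_⟩
  conv_rhs => rw [← EuclideanDomain.mod_add_div Q P, mul_comm]
  simp [shiftEval_apply, Module.End.mul_apply, h]

end ShiftSpan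

section PowerSeries

variable {K : Type*} [Field K]

theorem coeff_coe_mul_eq_aeval_seqShift_reflect (q : K[X]) (f : PowerSeries K) {D : ℕ}
    (hq : q.natDegree ≤ D) (n : ℕ) :
    PowerSeries.coeff (n + D) ((q : PowerSeries K) * f) =
      aeval (seqShift K) (reflect D q) (fun m => PowerSeries.coeff m f) n := by
  rw [aeval_eq_sum_range' (n := D + 1) (natDegree_reflect_le.trans_lt (by omega)),
    LinearMap.sum_apply, Finset.sum_apply, PowerSeries.coeff_mul,
    Finset.Nat.sum_antidiagonal_eq_sum_range_succ_mk,
    ← Finset.sum_subset (range_subset_range.2 (by omega : D + 1 ≤ n + D + 1)), ← sum_range_reflect]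
  · refine sum_congr rfl fun k hk => ?_
    rw [mem_range] at hk
    simp only [coeff_coe, LinearMap.smul_apply, Pi.smul_apply, smul_eq_mul, seqShift_pow_apply,
      coeff_reflect, revAt_le (by omega : k ≤ D)]
    rw [Nat.add_sub_cancel, show n + D - (D - k) = n + k by omega]
  · intro i _ hi
    rw [mem_range, not_lt] at hi
    rw [coeff_coe, coeff_eq_zero_of_natDegree_lt (by omega), zero_mul]

theorem isRationalPS_iff_exists_aeval_seqShift_eq_zero (f : PowerSeries ℚ) :
    IsRationalPS f ↔
      ∃ P : ℚ[X], P ≠ 0 ∧ aeval (seqShift ℚ) P (fun n => PowerSeries.coeff n f) = 0 := by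
  constructor
  · rintro ⟨p, q, hq0, hqf⟩
    set D := q.natDegree + p.natDegree + 1
    refine ⟨reflect D q, reflect_eq_zero_iff.not.2 (by rintro rfl; simp at hq0), funext fun n => ?_⟩
    rw [Pi.zero_apply, ← coeff_coe_mul_eq_aeval_seqShift_reflect q f (by omega), hqf, coeff_coe,
      coeff_eq_zero_of_natDegree_lt (by omega)]
  · rintro ⟨P, hP, h⟩
    set D := P.natDegree
    have hq : (reflect D P).natDegree ≤ D := natDegree_reflect_le.trans (max_self D).le
    refine ⟨PowerSeries.trunc D ((reflect D P : PowerSeries ℚ) * f), reflect D P, ?_, ?_⟩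
    · rwa [coeff_reflect, revAt_zero, ← leadingCoeff, leadingCoeff_ne_zero]
    · ext m
      rw [coeff_coe, PowerSeries.coeff_trunc]
      split_ifs with hm
      · rfl
      · obtain ⟨n, rfl⟩ := Nat.exists_eq_add_of_le (not_lt.1 hm)
        rw [add_comm, coeff_coe_mul_eq_aeval_seqShift_reflect _ f hq, reflect_reflect, h]
        rfl

theorem isRationalPS_iff_fg_shiftSpan (f : PowerSeries ℚ) :
    IsRationalPS f ↔ (shiftSpan fun n => PowerSeries.coeff n f).FG := by
  rw [isRationalPS_iff_exists_aeval_seqShift_eq_zero]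
  exact ⟨fun ⟨_, hP, h⟩ => fg_shiftSpan_of_aeval_seqShift_eq_zero hP h, exists_aeval_seqShift_eq_zero⟩

end PowerSeries

/-- The Hadamard product of two rational power series is rational. -/
theorem hadamard_rational (f g : PowerSeries ℚ)
    (hf : IsRationalPS f) (hg : IsRationalPS g) :
    IsRationalPS (hadamard f g) := by
  rw [isRationalPS_iff_fg_shiftSpan] at *
  have : (fun n => PowerSeries.coeff n (hadamard f g)) =
      (fun n => PowerSeries.coeff n f) * fun n => PowerSeries.coeff n g := by
    ext n; simp [hadamard]
  rw [this]
  exact hf.shiftSpan_mul hg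
end

section
/- Each entry of P* = Σ_{n≥0} Pⁿ (for P an N×N matrix over R⟨X⟩ with entries having zero constant term) is a rational power series in noncommuting variables, i.e., lies in the smallest subring of R⟨⟨X⟩⟩ containing R⟨X⟩ and closed under inversion of elements with invertible constant term. -/
open scoped Classical

/-- The (Cauchy) product of two noncommutative power series in the variables `X`,
viewed as coefficient functions `FreeMonoid X → R`. -/
noncomputable def ncMul {X : Type} {R : Type*} [Semiring R]
    (f g : FreeMonoid X → R) : FreeMonoid X → R := fun w =>
  ∑ m ∈ Finset.range (FreeMonoid.length w + 1),
    f (FreeMonoid.ofList ((FreeMonoid.toList w).take m)) *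
      g (FreeMonoid.ofList ((FreeMonoid.toList w).drop m))

/-- The multiplicative unit: the characteristic series of the empty word. -/
noncomputable def ncOne {X : Type} {R : Type*} [Semiring R] : FreeMonoid X → R :=
  fun w => if w = 1 then 1 else 0

/-- Rational noncommutative power series: the smallest class containing the
noncommutative polynomials `R⟨X⟩` and closed under addition, multiplication, and
inversion of series whose constant term is invertible. -/
inductive IsRatNC {X : Type} {R : Type*} [Semiring R] : (FreeMonoid X → R) → Prop
  | poly (p : MonoidAlgebra R (FreeMonoid X)) : IsRatNC (fun w => p.coeff w)
  | add {f g : FreeMonoid X → R} : IsRatNC f → IsRatNC g → IsRatNC (f + g)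
  | mul {f g : FreeMonoid X → R} : IsRatNC f → IsRatNC g → IsRatNC (ncMul f g)
  | inv {f g : FreeMonoid X → R} : IsRatNC f → IsUnit (f 1) →
      ncMul f g = ncOne → ncMul g f = ncOne → IsRatNC g

/-!
Power series without constant term lie in the Jacobson radical of the ring of rational series:
`1 + s` is invertible as a power series, and rationality is closed under such inverses. The
Jacobson radical of a matrix ring contains the matrices with entries in the radical, so `1 - P`
has a left inverse with rational entries. Since `P*` is a right inverse of `1 - P` (coefficientwise
the geometric series is a finite sum), the two coincide.
-/

theorem RingHom.isUnit_one_sub_of_forall_exists_mul_eq_one {A B : Type*} [Ring A] [Ring B]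
    (φ : A →+* B) (h : ∀ a, φ a = 0 → ∃ b, (1 - a) * b = 1) {a : A} (ha : φ a = 0) :
    IsUnit (1 - a) := by
  obtain ⟨b, hb⟩ := h a ha
  -- the right inverse `b = 1 + a * b` is again of the form `1 - a'` with `φ a' = 0`
  obtain ⟨c, hc⟩ := h (-(a * b)) (by simp [ha])
  have hb_eq : 1 - -(a * b) = b := by
    calc 1 - -(a * b) = (1 - a) * b + a * b := by rw [hb, sub_neg_eq_add]
      _ = b := by noncomm_ring
  rw [hb_eq] at hc
  have hc_eq : 1 - a = c := by
    calc 1 - a = (1 - a) * (b * c) := by rw [hc, mul_one]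
      _ = c := by rw [← mul_assoc, hb, one_mul]
  exact ⟨⟨1 - a, b, hb, by rw [hc_eq, hc]⟩, rfl⟩

theorem Matrix.exists_mul_one_sub_eq_one_of_mem_jacobson {A n : Type*} [Ring A] [Fintype n]
    [DecidableEq n] {Q : Matrix n n A} (hQ : ∀ i j, Q i j ∈ (⊥ : Ideal A).jacobson) :
    ∃ Z : Matrix n n A, Z * (1 - Q) = 1 := by
  have hQ' : Q ∈ (⊥ : Ideal (Matrix n n A)).jacobson := by
    simpa using Ideal.matrix_jacobson_le (n := n) (⊥ : Ideal A) ((Ideal.mem_matrix _ _ _).2 hQ)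
  obtain ⟨Z, hZ⟩ := Ideal.mem_jacobson_iff.1 hQ' (-1)
  refine ⟨Z, ?_⟩
  rw [Ideal.mem_bot] at hZ
  rw [← sub_eq_zero, ← hZ]
  noncomm_ring

theorem FreeMonoid.ofList_eq_one {X : Type*} {l : List X} : FreeMonoid.ofList l = 1 ↔ l = [] :=
  FreeMonoid.ofList.eq_symm_apply.symm

theorem MonoidAlgebra.coeff_mul_ofList {X : Type*} {R : Type*} [Semiring R]
    (p q : MonoidAlgebra R (FreeMonoid X)) (l : List X) :
    (p * q).coeff (.ofList l) = ∑ m ∈ Finset.range (l.length + 1),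
      p.coeff (.ofList (l.take m)) * q.coeff (.ofList (l.drop m)) := by
  let split (m : ℕ) : FreeMonoid X × FreeMonoid X := (.ofList (l.take m), .ofList (l.drop m))
  have mem_split {uv : FreeMonoid X × FreeMonoid X} :
      uv ∈ (Finset.range (l.length + 1)).image split ↔ uv.1 * uv.2 = .ofList l := by
    obtain ⟨u, v⟩ := uv
    simp only [Finset.mem_image, Finset.mem_range, Prod.ext_iff, split]
    constructor
    · rintro ⟨m, -, rfl, rfl⟩
      rw [← FreeMonoid.ofList_append, List.take_append_drop]
    · intro h
      have hl : u.toList ++ v.toList = l := by simpa using congrArg FreeMonoid.toList h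
      refine ⟨u.toList.length, ?_, ?_, ?_⟩ <;> simp [← hl]
  have split_injOn : Set.InjOn split (Finset.range (l.length + 1)) := by
    intro m hm m' hm' h
    have := congrArg (fun uv => (FreeMonoid.toList uv.1).length) h
    simp_all [split]
  rw [MonoidAlgebra.coeff_mul_antidiag p q _ _ mem_split, Finset.sum_image split_injOn]

/-- A type synonym, since `FreeMonoid X → R` already carries the pointwise product. -/
def NCSeries (X : Type) (R : Type*) : Type _ := FreeMonoid X → R

namespace NCSeries

section Semiring

variable {X : Type} {R : Type*} [Semiring R]

lemma ncMul_ofList (f g : FreeMonoid X → R) (l : List X) :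
    ncMul f g (.ofList l) = ∑ m ∈ Finset.range (l.length + 1),
      f (.ofList (l.take m)) * g (.ofList (l.drop m)) := by
  simp [ncMul, FreeMonoid.length]

lemma ncMul_assoc (f g h : FreeMonoid X → R) :
    ncMul (ncMul f g) h = ncMul f (ncMul g h) := by
  funext w
  obtain ⟨l, rfl⟩ := FreeMonoid.ofList.surjective w
  set F : ℕ → ℕ → R := fun k m =>
    f (.ofList (l.take k)) * (g (.ofList ((l.take m).drop k)) * h (.ofList (l.drop m)))
  calc ncMul (ncMul f g) h (.ofList l)
      = ∑ m ∈ Finset.Ico 0 (l.length + 1), ∑ k ∈ Finset.Ico 0 (m + 1), F k m := by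
        simp only [ncMul_ofList, Finset.sum_mul, mul_assoc, ← Finset.range_eq_Ico]
        refine Finset.sum_congr rfl fun m hm => ?_
        rw [List.length_take, min_eq_left (by simpa [Nat.lt_succ_iff] using hm)]
        refine Finset.sum_congr rfl fun k hk => ?_
        rw [List.take_take, min_eq_left (by simpa [Nat.lt_succ_iff] using hk)]
    _ = ∑ k ∈ Finset.Ico 0 (l.length + 1), ∑ m ∈ Finset.Ico k (l.length + 1), F k m :=
        (Finset.sum_Ico_Ico_comm _ _ _).symm
    _ = ncMul f (ncMul g h) (.ofList l) := by
        simp only [ncMul_ofList, Finset.mul_sum, ← Finset.range_eq_Ico]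
        refine Finset.sum_congr rfl fun k hk => ?_
        rw [Finset.sum_Ico_eq_sum_range, List.length_drop,
          Nat.sub_add_comm (by simpa [Nat.lt_succ_iff] using hk)]
        refine Finset.sum_congr rfl fun j _ => ?_
        simp only [F, List.drop_take, List.drop_drop, Nat.add_sub_cancel_left]

lemma ncOne_ncMul (f : FreeMonoid X → R) : ncMul ncOne f = f := by
  funext w
  obtain ⟨l, rfl⟩ := FreeMonoid.ofList.surjective w
  rw [ncMul_ofList, Finset.sum_eq_single 0 (fun m hm hm0 => ?_) (by simp)]
  · simp [ncOne]
  · have : l.take m ≠ [] := by rw [Ne, List.take_eq_nil_iff]; rintro (h | rfl) <;> simp_all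
    simp [ncOne, FreeMonoid.ofList_eq_one, this]

lemma ncMul_ncOne (f : FreeMonoid X → R) : ncMul f ncOne = f := by
  funext w
  obtain ⟨l, rfl⟩ := FreeMonoid.ofList.surjective w
  rw [ncMul_ofList, Finset.sum_eq_single l.length (fun m hm hmL => ?_) (by simp)]
  · simp [ncOne]
  · have : l.drop m ≠ [] := by simp_all; omega
    simp [ncOne, FreeMonoid.ofList_eq_one, this]

lemma ncMul_add (f g h : FreeMonoid X → R) : ncMul f (g + h) = ncMul f g + ncMul f h := by
  funext w
  simp [ncMul, mul_add, Finset.sum_add_distrib]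

lemma add_ncMul (f g h : FreeMonoid X → R) : ncMul (f + g) h = ncMul f h + ncMul g h := by
  funext w
  simp [ncMul, add_mul, Finset.sum_add_distrib]

lemma zero_ncMul (f : FreeMonoid X → R) : ncMul 0 f = 0 := by
  funext w
  simp [ncMul]

lemma ncMul_zero (f : FreeMonoid X → R) : ncMul f 0 = 0 := by
  funext w
  simp [ncMul]

end Semiring

variable {X : Type} {R : Type*} [Ring R]

instance : AddCommGroup (NCSeries X R) := inferInstanceAs (AddCommGroup (FreeMonoid X → R))

noncomputable instance : Ring (NCSeries X R) where
  mul := ncMul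
  one := ncOne
  mul_assoc := ncMul_assoc
  one_mul := ncOne_ncMul
  mul_one := ncMul_ncOne
  left_distrib := ncMul_add
  right_distrib := add_ncMul
  zero_mul := zero_ncMul
  mul_zero := ncMul_zero

lemma mul_def (f g : NCSeries X R) : f * g = ncMul f g := rfl

lemma one_def : (1 : NCSeries X R) = ncOne := rfl

lemma sum_apply {α : Type*} (s : Finset α) (f : α → NCSeries X R) (w : FreeMonoid X) :
    (∑ a ∈ s, f a) w = ∑ a ∈ s, f a w :=
  Finset.sum_apply w s f

lemma sub_apply (f g : NCSeries X R) (w : FreeMonoid X) : (f - g) w = f w - g w := rfl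

noncomputable def constCoeff : NCSeries X R →+* R where
  toFun f := f 1
  map_one' := by simp [one_def, ncOne]
  map_mul' f g := by simp [mul_def, ncMul, FreeMonoid.length]
  map_zero' := rfl
  map_add' _ _ := rfl

lemma constCoeff_apply (f : NCSeries X R) : constCoeff f = f 1 := rfl

noncomputable def ofMonoidAlgebra : MonoidAlgebra R (FreeMonoid X) →+* NCSeries X R where
  toFun p w := p.coeff w
  map_one' := by
    funext w
    simp [one_def, ncOne, MonoidAlgebra.one_def, Finsupp.single_apply, eq_comm]
  map_mul' p q := by
    funext w
    obtain ⟨l, rfl⟩ := FreeMonoid.ofList.surjective w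
    exact (MonoidAlgebra.coeff_mul_ofList p q l).trans (ncMul_ofList _ _ l).symm
  map_zero' := rfl
  map_add' _ _ := rfl

section Matrix

variable {ι κ ν : Type*} [Fintype ι]

lemma matrix_mul_apply_ofList (M : Matrix κ ι (NCSeries X R)) (N : Matrix ι ν (NCSeries X R))
    (i : κ) (j : ν) (l : List X) :
    (M * N) i j (.ofList l) = ∑ m ∈ Finset.range (l.length + 1),
      ∑ k, M i k (.ofList (l.take m)) * N k j (.ofList (l.drop m)) := by
  rw [Matrix.mul_apply, sum_apply, Finset.sum_comm]
  exact Finset.sum_congr rfl fun k _ => ncMul_ofList _ _ _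

lemma matrix_mul_apply_congr_right (M : Matrix κ ι (NCSeries X R))
    {N N' : Matrix ι ν (NCSeries X R)} {w : FreeMonoid X}
    (h : ∀ u : FreeMonoid X, u.length ≤ w.length → ∀ k j, N k j u = N' k j u) (i : κ) (j : ν) :
    (M * N) i j w = (M * N') i j w := by
  obtain ⟨l, rfl⟩ := FreeMonoid.ofList.surjective w
  simp only [matrix_mul_apply_ofList]
  refine Finset.sum_congr rfl fun m _ => Finset.sum_congr rfl fun k _ => ?_
  rw [h _ (by simp [FreeMonoid.length])]

variable [DecidableEq ι]

lemma matrix_pow_apply_eq_zero {Q : Matrix ι ι (NCSeries X R)} (hQ : ∀ i j, Q i j 1 = 0)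
    {n : ℕ} {w : FreeMonoid X} (hw : w.length < n) (i j : ι) : (Q ^ n) i j w = 0 := by
  induction n generalizing w i j with
  | zero => omega
  | succ n ih =>
    obtain ⟨l, rfl⟩ := FreeMonoid.ofList.surjective w
    rw [pow_succ', matrix_mul_apply_ofList]
    refine Finset.sum_eq_zero fun m hm => Finset.sum_eq_zero fun k _ => ?_
    rcases Nat.eq_zero_or_pos m with rfl | hm0
    · simp [hQ]
    · rw [ih (by simp [FreeMonoid.length] at hw hm ⊢; omega), mul_zero]

/-- `Q* = ∑ₙ Qⁿ`, truncated at `n = |w|` in the coefficient at `w`: beyond that, `Qⁿ` vanishes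
at `w` when `Q` has no constant term. -/
noncomputable def kleeneStar (Q : Matrix ι ι (NCSeries X R)) : Matrix ι ι (NCSeries X R) :=
  Matrix.of fun i j w => ∑ n ∈ Finset.range (w.length + 1), (Q ^ n) i j w

lemma kleeneStar_apply_eq_geom_sum {Q : Matrix ι ι (NCSeries X R)} (hQ : ∀ i j, Q i j 1 = 0)
    {w : FreeMonoid X} {t : ℕ} (ht : w.length ≤ t) (i j : ι) :
    kleeneStar Q i j w = (∑ n ∈ Finset.range (t + 1), Q ^ n) i j w := by
  rw [Matrix.sum_apply, sum_apply]
  refine Finset.sum_subset (Finset.range_subset_range.2 (by omega)) fun n _ hn => ?_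
  exact matrix_pow_apply_eq_zero hQ (by simp at hn; omega) i j

lemma one_sub_mul_kleeneStar {Q : Matrix ι ι (NCSeries X R)} (hQ : ∀ i j, Q i j 1 = 0) :
    (1 - Q) * kleeneStar Q = 1 := by
  refine Matrix.ext fun i j => funext fun w => ?_
  calc ((1 - Q) * kleeneStar Q) i j w
      = ((1 - Q) * ∑ n ∈ Finset.range (w.length + 1), Q ^ n) i j w :=
        matrix_mul_apply_congr_right _ (fun u hu k j => kleeneStar_apply_eq_geom_sum hQ hu k j) i j
    _ = (1 - Q ^ (w.length + 1)) i j w := by rw [mul_neg_geom_sum]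
    _ = (1 : Matrix ι ι (NCSeries X R)) i j w := by
        rw [Matrix.sub_apply, sub_apply, matrix_pow_apply_eq_zero hQ (by omega), sub_zero]

end Matrix

lemma exists_one_sub_mul_eq_one {f : NCSeries X R} (hf : f 1 = 0) : ∃ g, (1 - f) * g = 1 := by
  let Q : Matrix Unit Unit (NCSeries X R) := Matrix.of fun _ _ => f
  refine ⟨kleeneStar Q () (), ?_⟩
  have h := congrArg Matrix.uniqueRingEquiv (one_sub_mul_kleeneStar (Q := Q) fun _ _ => hf)
  rw [map_mul, map_sub, map_one] at h
  exact h

lemma isUnit_one_sub {f : NCSeries X R} (hf : f 1 = 0) : IsUnit (1 - f) :=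
  constCoeff.isUnit_one_sub_of_forall_exists_mul_eq_one (fun _ => exists_one_sub_mul_eq_one) hf

def rationalSubring (X : Type) (R : Type*) [Ring R] : Subring (NCSeries X R) where
  carrier := {f | IsRatNC f}
  mul_mem' := IsRatNC.mul
  one_mem' := map_one (ofMonoidAlgebra (X := X) (R := R)) ▸ IsRatNC.poly 1
  add_mem' := IsRatNC.add
  zero_mem' := map_zero (ofMonoidAlgebra (X := X) (R := R)) ▸ IsRatNC.poly 0
  neg_mem' {f} hf := by
    have : -f = ofMonoidAlgebra (-1) * f := by simp
    rw [this]
    exact IsRatNC.mul (.poly (-1)) hf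

lemma mem_jacobson_rationalSubring {s : rationalSubring X R} (hs : (s : NCSeries X R) 1 = 0) :
    s ∈ (⊥ : Ideal (rationalSubring X R)).jacobson := by
  rw [Ideal.mem_jacobson_iff]
  intro y
  set t : NCSeries X R := -(y * s : rationalSubring X R) with ht_def
  have ht : constCoeff t = 0 := by
    simp only [t, map_neg, Subring.coe_mul, map_mul, constCoeff_apply, hs, mul_zero, neg_zero]
  obtain ⟨u, hu⟩ := isUnit_one_sub (f := t) ht
  have hu_mem : (u : NCSeries X R) ∈ rationalSubring X R := by
    rw [hu]
    exact sub_mem (one_mem _) (neg_mem (y * s).2)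
  have hu_const : IsUnit (constCoeff (u : NCSeries X R)) := by
    rw [hu, map_sub, map_one, ht, sub_zero]
    exact isUnit_one
  have hinv_mem : (↑u⁻¹ : NCSeries X R) ∈ rationalSubring X R :=
    IsRatNC.inv hu_mem hu_const u.mul_inv u.inv_mul
  refine ⟨⟨_, hinv_mem⟩, ?_⟩
  rw [Ideal.mem_bot, sub_eq_zero]
  apply Subtype.ext
  calc (↑u⁻¹ : NCSeries X R) * y * s + ↑u⁻¹ = ↑u⁻¹ * ↑u := by
        rw [hu, ht_def, Subring.coe_mul]
        noncomm_ring
    _ = 1 := u.inv_mul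

lemma kleeneStar_mem_rationalSubring {ι : Type*} [Fintype ι] [DecidableEq ι]
    {Q : Matrix ι ι (NCSeries X R)} (hrat : ∀ i j, Q i j ∈ rationalSubring X R)
    (hQ : ∀ i j, Q i j 1 = 0) (i j : ι) : kleeneStar Q i j ∈ rationalSubring X R := by
  let Q' : Matrix ι ι (rationalSubring X R) := Matrix.of fun i j => ⟨Q i j, hrat i j⟩
  obtain ⟨Z, hZ⟩ := Matrix.exists_mul_one_sub_eq_one_of_mem_jacobson (Q := Q')
    fun i j => mem_jacobson_rationalSubring (hQ i j)
  have hZ' : (rationalSubring X R).subtype.mapMatrix Z * (1 - Q) = 1 := by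
    have h := congrArg (rationalSubring X R).subtype.mapMatrix hZ
    rw [map_mul, map_sub, map_one] at h
    exact h
  rw [← left_inv_eq_right_inv hZ' (one_sub_mul_kleeneStar hQ)]
  exact (Z i j).2

end NCSeries

theorem geometric_series_entries_rational_general {X : Type} {N : ℕ} {R : Type*}
    [Field R] (P : Matrix (Fin N) (Fin N) (MonoidAlgebra R (FreeMonoid X)))
    (hP : ∀ i j, (P i j).coeff 1 = 0) (i j : Fin N) :
    IsRatNC (fun w : FreeMonoid X =>
      ∑ n ∈ Finset.range (FreeMonoid.length w + 1), ((P ^ n) i j).coeff w) := by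
  have h_star : (fun w : FreeMonoid X =>
      ∑ n ∈ Finset.range (FreeMonoid.length w + 1), ((P ^ n) i j).coeff w) =
      NCSeries.kleeneStar (NCSeries.ofMonoidAlgebra.mapMatrix P) i j := by
    funext w
    simp only [NCSeries.kleeneStar, ← map_pow]
    rfl
  rw [h_star]
  exact NCSeries.kleeneStar_mem_rationalSubring (fun i j => IsRatNC.poly (P i j)) hP i j

/-- Each entry of `P* = Σₙ Pⁿ` (for `P` a matrix of noncommutative polynomials whose
entries have zero constant term) is a rational noncommutative power series. -/
theorem geometric_series_entries_rational {X : Type} [Fintype X] {N : ℕ} {R : Type*}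
    [Field R] (P : Matrix (Fin N) (Fin N) (MonoidAlgebra R (FreeMonoid X)))
    (hP : ∀ i j, (P i j).coeff 1 = 0) (i j : Fin N) :
    IsRatNC (fun w : FreeMonoid X =>
      ∑ n ∈ Finset.range (FreeMonoid.length w + 1), ((P ^ n) i j).coeff w) :=
  geometric_series_entries_rational_general P hP i j
end

section
/- If a formal power series f ∈ ℚ[[z]] is algebraic over ℚ(z) (satisfies a nonzero polynomial equation Q(f, z) = 0 with Q ∈ ℚ[y,z]), then f is holonomic: it satisfies a nontrivial linear differential equation with coefficients in ℚ[z]. -/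
/-!
An algebraic power series `f` generates a finite extension `ℚ(X)(f)` of `ℚ(X)` inside the
fraction field of `ℚ⟦X⟧`. The derivation `d/dX` extends to that fraction field and maps
`ℚ(X)(f)` into itself: differentiating `P(f) = 0` for the minimal polynomial `P` of `f` gives
`P'(f) f' = -(P^d)(f)`, where `P^d` differentiates the coefficients, and `P'(f) ≠ 0` by
separability. Hence `f, f', f'', …` all lie in a `ℚ(X)`-vector space of finite dimension `n`,
so `f, …, f⁽ⁿ⁾` are linearly dependent over `ℚ(X)`, hence over `ℚ[X]`.
-/

open Polynomial IntermediateField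

theorem IntermediateField.aeval_mem_adjoin_simple {F K : Type*} [Field F] [Field K] [Algebra F K]
    (x : K) (p : F[X]) : aeval x p ∈ F⟮x⟯ := by
  rw [← AdjoinSimple.coe_aeval_gen_apply]
  exact SetLike.coe_mem _

namespace Derivation

section Localization

variable {R A : Type*} [CommRing R] [CommRing A] [Algebra R A] (M : Submonoid A)
  (S : Type*) [CommRing S] [Algebra R S] [Algebra A S] [IsScalarTower R A S] [IsLocalization M S]

/-- Kähler differentials commute with localization, so `d`, seen as a linear form on `Ω[A⁄R]`,
extends to `Ω[S⁄R]`. -/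
noncomputable def extendLocalization (d : Derivation R A A) : Derivation R S S :=
  KaehlerDifferential.linearMapEquivDerivation R S <|
    (IsLocalizedModule.lift M (KaehlerDifferential.map R R A S)
      (Algebra.linearMap A S ∘ₗ d.liftKaehlerDifferential)
      (IsLocalizedModule.map_units (Algebra.linearMap A S))).extendScalarsOfIsLocalization M S

theorem extendLocalization_algebraMap (d : Derivation R A A) (a : A) :
    d.extendLocalization M S (algebraMap A S a) = algebraMap A S (d a) := by
  change IsLocalizedModule.lift M _ _ (IsLocalizedModule.map_units (Algebra.linearMap A S))
    (KaehlerDifferential.D R S (algebraMap A S a)) = _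
  rw [← KaehlerDifferential.map_D R R A S, IsLocalizedModule.lift_apply]
  simp

theorem iterate_extendLocalization_algebraMap (d : Derivation R A A) (a : A) (n : ℕ) :
    (⇑(d.extendLocalization M S))^[n] (algebraMap A S a) = algebraMap A S ((⇑d)^[n] a) := by
  induction n with
  | zero => rfl
  | succ n ih =>
    rw [Function.iterate_succ_apply', ih, extendLocalization_algebraMap,
      Function.iterate_succ_apply']

end Localization

section AdjoinSimple

variable {R F K : Type*} [CommRing R] [Field F] [Field K] [Algebra R K] [Algebra F K]
  (D : Derivation R K K)

theorem apply_aeval_sub_mem_adjoin_simple (x : K)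
    (hD : ∀ c : F, D (algebraMap F K c) ∈ F⟮x⟯) (p : F[X]) :
    D (aeval x p) - aeval x (derivative p) * D x ∈ F⟮x⟯ := by
  induction p using Polynomial.induction_on' with
  | add p q hp hq =>
    simpa only [map_add, derivative_add, add_mul, add_sub_add_comm] using add_mem hp hq
  | monomial n c =>
    have key : D (aeval x (monomial n c)) - aeval x (derivative (monomial n c)) * D x =
        x ^ n * D (algebraMap F K c) := by
      rw [aeval_monomial, derivative_monomial, aeval_monomial, leibniz, leibniz_pow]
      simp only [smul_eq_mul, map_mul, nsmul_eq_mul, _root_.map_natCast]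
      ring
    rw [key]
    exact mul_mem (pow_mem (mem_adjoin_simple_self F x) n) (hD c)

variable [CharZero F]

theorem apply_mem_adjoin_simple {x : K} (hx : IsIntegral F x)
    (hD : ∀ c : F, D (algebraMap F K c) ∈ Set.range (algebraMap F K)) {y : K}
    (hy : y ∈ F⟮x⟯) : D y ∈ F⟮x⟯ := by
  have hD' (c : F) : D (algebraMap F K c) ∈ F⟮x⟯ := by
    obtain ⟨c', hc'⟩ := hD c
    exact hc' ▸ IntermediateField.algebraMap_mem _ c'
  have hDx : D x ∈ F⟮x⟯ := by
    have hrel := apply_aeval_sub_mem_adjoin_simple D x hD' (minpoly F x)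
    rw [minpoly.aeval, map_zero, zero_sub, neg_mem_iff] at hrel
    have hsep : aeval x (derivative (minpoly F x)) ≠ 0 :=
      (minpoly.irreducible hx).separable.aeval_derivative_ne_zero (minpoly.aeval F x)
    simpa [hsep] using mul_mem (inv_mem (aeval_mem_adjoin_simple x (derivative (minpoly F x)))) hrel
  obtain ⟨p, rfl⟩ : ∃ p : F[X], aeval x p = y := by
    rwa [← SetLike.mem_coe, ← IntermediateField.coe_toSubalgebra,
      adjoin_simple_toSubalgebra_of_isAlgebraic hx.isAlgebraic,
      Algebra.adjoin_singleton_eq_range_aeval] at hy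
  simpa using add_mem (apply_aeval_sub_mem_adjoin_simple D x hD' p)
    (mul_mem (aeval_mem_adjoin_simple x (derivative p)) hDx)

theorem iterate_mem_adjoin_simple {x : K} (hx : IsIntegral F x)
    (hD : ∀ c : F, D (algebraMap F K c) ∈ Set.range (algebraMap F K)) (n : ℕ) :
    (⇑D)^[n] x ∈ F⟮x⟯ := by
  induction n with
  | zero => exact mem_adjoin_simple_self F x
  | succ n ih =>
    rw [Function.iterate_succ_apply']
    exact D.apply_mem_adjoin_simple hx hD ih

theorem not_linearIndependent_iterate {x : K} (hx : IsIntegral F x)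
    (hD : ∀ c : F, D (algebraMap F K c) ∈ Set.range (algebraMap F K)) :
    ¬ LinearIndependent F fun n : Fin (Module.finrank F F⟮x⟯ + 1) => (⇑D)^[n] x := by
  have := adjoin.finiteDimensional hx
  intro hli
  have hle := Submodule.finrank_mono (t := F⟮x⟯.toSubalgebra.toSubmodule) <|
    Submodule.span_le.mpr <| Set.range_subset_iff.mpr
      fun n : Fin (Module.finrank F F⟮x⟯ + 1) => D.iterate_mem_adjoin_simple hx hD n
  rw [finrank_span_eq_card hli] at hle
  simp at hle

end AdjoinSimple

end Derivation

open scoped PowerSeries RatFunc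

namespace PowerSeries

variable (k : Type*) [Field k]

instance : FaithfulSMul k[X] (FractionRing k⟦X⟧) :=
  (faithfulSMul_iff_algebraMap_injective _ _).mpr <| by
    rw [IsScalarTower.algebraMap_eq k[X] k⟦X⟧ (FractionRing k⟦X⟧)]
    exact (IsFractionRing.injective k⟦X⟧ _).comp (Polynomial.coe_injective k)

noncomputable def fractionRingDerivation :
    Derivation k (FractionRing k⟦X⟧) (FractionRing k⟦X⟧) :=
  (derivative k).extendLocalization (nonZeroDivisors k⟦X⟧) _

variable {k}

theorem fractionRingDerivation_algebraMap_polynomial (p : k[X]) :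
    fractionRingDerivation k (algebraMap k[X] (FractionRing k⟦X⟧) p) =
      algebraMap k[X] (FractionRing k⟦X⟧) (Polynomial.derivative p) := by
  rw [IsScalarTower.algebraMap_apply k[X] k⟦X⟧, fractionRingDerivation,
    Derivation.extendLocalization_algebraMap, IsScalarTower.algebraMap_apply k[X] k⟦X⟧]
  exact congrArg _ (derivative_coe p)

theorem fractionRingDerivation_algebraMap_ratFunc_mem_range (c : RatFunc k) :
    fractionRingDerivation k (algebraMap (RatFunc k) (FractionRing k⟦X⟧) c) ∈
      Set.range (algebraMap (RatFunc k) (FractionRing k⟦X⟧)) := by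
  obtain ⟨p, q, -, rfl⟩ := IsFractionRing.div_surjective (A := k[X]) c
  refine ⟨(algebraMap k[X] (RatFunc k) q)⁻¹ ^ 2 *
    (algebraMap k[X] (RatFunc k) q * algebraMap k[X] (RatFunc k) (Polynomial.derivative p) -
      algebraMap k[X] (RatFunc k) p * algebraMap k[X] (RatFunc k) (Polynomial.derivative q)), ?_⟩
  simp only [map_div₀, map_mul, map_sub, map_pow, map_inv₀, Derivation.leibniz_div, smul_eq_mul,
    ← IsScalarTower.algebraMap_apply, fractionRingDerivation_algebraMap_polynomial]

end PowerSeries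

open PowerSeries

theorem IsAlgebraicPS.isIntegral_algebraMap {f : ℚ⟦X⟧} (hf : IsAlgebraicPS f) :
    IsIntegral (RatFunc ℚ) (algebraMap ℚ⟦X⟧ (FractionRing ℚ⟦X⟧) f) := by
  obtain ⟨Q, hQ, hQf⟩ := hf
  refine (IsAlgebraic.extendScalars (IsFractionRing.injective ℚ[X] (RatFunc ℚ)) ?_).isIntegral
  refine ⟨Q, hQ, ?_⟩
  rw [aeval_algebraMap_apply, aeval_def]
  exact (congrArg _ hQf).trans (map_zero _)

/-- Every algebraic power series is holonomic. -/
theorem algebraic_isHolonomic (f : PowerSeries ℚ) (hf : IsAlgebraicPS f) :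
    IsHolonomicPS f := by
  have hdep := (fractionRingDerivation ℚ).not_linearIndependent_iterate hf.isIntegral_algebraMap
    fractionRingDerivation_algebraMap_ratFunc_mem_range
  rw [← LinearIndependent.iff_fractionRing ℚ[X] (RatFunc ℚ)] at hdep
  obtain ⟨c, hc, j, hj⟩ := Fintype.not_linearIndependent_iff.mp hdep
  refine ⟨_, c, ⟨j, hj⟩, IsFractionRing.injective ℚ⟦X⟧ (FractionRing ℚ⟦X⟧) ?_⟩
  rw [map_sum, map_zero, ← hc]
  refine Finset.sum_congr rfl fun i _ => ?_
  rw [fractionRingDerivation, Derivation.iterate_extendLocalization_algebraMap, Algebra.smul_def,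
    IsScalarTower.algebraMap_apply ℚ[X] ℚ⟦X⟧, map_mul]
  rfl
end
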